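/- arXiv:2304.09743 — 2 statements merged into one kernel-verified Lean document; each statement's English description precedes it below -/
import Mathlib

section
/- Let U be a finite set, let z be a nondegenerate nonnegative weight vector, let S ⊆ U be nonempty and T ⊆ U. Then the pseudo-derivative is nonnegative and bounds the derivative from above: max(∂f(S)/∂z_T, 0) ≤ ∂̂f(S)/∂̂z_T. -/
open Finset

variable {α : Type*} [Fintype α] [DecidableEq α]

/-- `E` crosses `S` if both `S ∩ E` and `S \ E` are nonempty. -/
def Crosses (E S : Finset α) : Prop := (S ∩ E).Nonempty ∧ (S \ E).Nonempty

instance (E S : Finset α) : Decidable (Crosses E S) := by unfold Crosses; infer_instance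

/-- The family of subsets of the ground set crossing `S`. -/
def crossers (S : Finset α) : Finset (Finset α) := univ.filter (fun E => Crosses E S)

/-- `ℓ(p)`: total weight of the sets containing `p`. -/
def ell (z : Finset α → ℝ) (p : α) : ℝ := ∑ E ∈ univ.filter (fun E => p ∈ E), z E

lemma card_sdiff_lt_of_mem_crossers {E S : Finset α} (h : E ∈ crossers S) :
    (S \ E).card < S.card := by
  have h' : Crosses E S := (mem_filter.mp h).2
  obtain ⟨⟨x, hx⟩, -⟩ := h'
  refine card_lt_card ((ssubset_iff_of_subset sdiff_subset).mpr ?_)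
  exact ⟨x, (mem_inter.mp hx).1, fun hmem => (mem_sdiff.mp hmem).2 (mem_inter.mp hx).2⟩

/-- The function `f(S)` from the Closest Point Process. -/
noncomputable def fval (z : Finset α → ℝ) (S : Finset α) : ℝ :=
  if S.card ≤ 1 then ∑ p ∈ S, ell z p
  else if 0 < ∑ E ∈ crossers S, z E then
    (∑ E ∈ (crossers S).attach, z E.1 * fval z (S \ E.1)) / (∑ E ∈ crossers S, z E)
  else 0
termination_by S.card
decreasing_by exact card_sdiff_lt_of_mem_crossers E.2

/-- A weight vector is nondegenerate if every `S` with `|S| ≥ 2` has positive crossing weight. -/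
def Nondeg (z : Finset α → ℝ) : Prop :=
  ∀ S : Finset α, 2 ≤ S.card → 0 < ∑ E ∈ crossers S, z E

/-- The partial derivative `∂f(S)/∂z_T`. -/
noncomputable def pderivf (S T : Finset α) (z : Finset α → ℝ) : ℝ :=
  fderiv ℝ (fun w : Finset α → ℝ => fval w S) z (Pi.single T 1)

/-- The pseudo-derivative `∂̂f(S)/∂̂z_T`. -/
noncomputable def pdhat (z : Finset α → ℝ) (S T : Finset α) : ℝ :=
  if S ⊆ T then 1
  else if S ∩ T = ∅ then 0
  else (∑ E ∈ (crossers S).attach, z E.1 * pdhat z (S \ E.1) T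
        + fval z (S \ T) - ∑ E ∈ univ.filter (fun E => S ⊆ E), z E)
       / (∑ E ∈ crossers S, z E)
termination_by S.card
decreasing_by exact card_sdiff_lt_of_mem_crossers E.2

/-- The `m`-th harmonic number. -/
noncomputable def harm (m : ℕ) : ℝ := ∑ j ∈ Finset.range m, 1 / ((j : ℝ) + 1)

/-!
Multiplying the recursion for `f(S)` by the crossing weight `D = Σ_{E ∈ 𝒞_S} z_E` and
differentiating gives
`∂f(S)/∂z_T · D = Σ_{E ∈ 𝒞_S} z_E ∂f(S∖E)/∂z_T + [T ∈ 𝒞_S] (f(S∖T) - f(S))`,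
which is the recursion of the pseudo-derivative with `f(S)` in place of `Σ_{E ⊇ S} z_E`.
Since `f(W)` is a weighted average of values `ℓ(p)` with `p ∈ W`, and `ℓ(p) ≥ Σ_{E ⊇ S} z_E`
for `p ∈ S`, we have `Σ_{E ⊇ S} z_E ≤ f(W)` for every nonempty `W ⊆ S`. Induction on `|S|`
then gives `∂f(S)/∂z_T ≤ ∂̂f(S)/∂̂z_T`, and (with `W = S ∖ T`) `0 ≤ ∂̂f(S)/∂̂z_T`.
-/

open Finset Filter Topology

lemma fderiv_sum_apply_single {ι : Type*} [Fintype ι] [DecidableEq ι] (s : Finset ι)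
    (z : ι → ℝ) (j : ι) :
    fderiv ℝ (fun w : ι → ℝ => ∑ i ∈ s, w i) z (Pi.single j 1) = if j ∈ s then 1 else 0 := by
  rw [(HasFDerivAt.fun_sum fun i _ => hasFDerivAt_apply i z).fderiv, _root_.sum_apply]
  simp only [ContinuousLinearMap.proj_apply, Pi.single_apply]
  rw [sum_ite_eq']

lemma fderiv_apply_mul_apply_single {ι : Type*} [Fintype ι] [DecidableEq ι]
    {g : (ι → ℝ) → ℝ} {z : ι → ℝ} (hg : DifferentiableAt ℝ g z) (i j : ι) :
    fderiv ℝ (fun w => w i * g w) z (Pi.single j 1)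
      = z i * fderiv ℝ g z (Pi.single j 1) + if i = j then g z else 0 := by
  rw [fderiv_fun_mul (differentiableAt_apply i z) hg, (hasFDerivAt_apply i z).fderiv]
  simp [Pi.single_apply]

section

variable {β : Type*} [DecidableEq β] {E S T : Finset β}

lemma Crosses.sdiff_ssubset (h : Crosses E S) : S \ E ⊂ S := by
  obtain ⟨x, hx⟩ := h.1
  rw [mem_inter] at hx
  exact (ssubset_iff_of_subset sdiff_subset).mpr ⟨x, hx.1, fun h' => (mem_sdiff.mp h').2 hx.2⟩

lemma crosses_iff : Crosses T S ↔ ¬ S ⊆ T ∧ ¬ S ∩ T = ∅ := by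
  rw [Crosses, sdiff_nonempty, nonempty_iff_ne_empty, and_comm]

end

variable {z : Finset α → ℝ} {E S T W : Finset α}

@[simp]
lemma mem_crossers : E ∈ crossers S ↔ Crosses E S := by
  simp [crossers]

lemma fval_of_card_le_one (z : Finset α → ℝ) (h : S.card ≤ 1) :
    fval z S = ∑ p ∈ S, ell z p := by
  rw [fval, if_pos h]

lemma fval_fun_eq_of_card_le_one (h : S.card ≤ 1) :
    (fun w => fval w S) = fun w => ∑ p ∈ S, ∑ E ∈ univ.filter (p ∈ ·), w E :=
  funext fun w => fval_of_card_le_one w h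

lemma fval_of_pos (h2 : 2 ≤ S.card) (hD : 0 < ∑ E ∈ crossers S, z E) :
    fval z S = (∑ E ∈ crossers S, z E * fval z (S \ E)) / ∑ E ∈ crossers S, z E := by
  rw [fval, if_neg (by omega), if_pos hD, sum_attach (crossers S) fun E => z E * fval z (S \ E)]

lemma pdhat_of_subset (h : S ⊆ T) : pdhat z S T = 1 := by
  rw [pdhat, if_pos h]

lemma pdhat_of_inter_eq_empty (hST : ¬ S ⊆ T) (h : S ∩ T = ∅) : pdhat z S T = 0 := by
  rw [pdhat, if_neg hST, if_pos h]

lemma pdhat_of_crosses (h : Crosses T S) :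
    pdhat z S T = (∑ E ∈ crossers S, z E * pdhat z (S \ E) T + fval z (S \ T)
      - ∑ E ∈ univ.filter (fun E => S ⊆ E), z E) / ∑ E ∈ crossers S, z E := by
  obtain ⟨hST, hI⟩ := crosses_iff.mp h
  rw [pdhat, if_neg hST, if_neg hI, sum_attach (crossers S) fun E => z E * pdhat z (S \ E) T]

lemma le_fval_of_le_ell (hz : ∀ E, 0 ≤ z E) (hnd : Nondeg z) {c : ℝ} (hS : S.Nonempty)
    (hc : ∀ p ∈ S, c ≤ ell z p) : c ≤ fval z S := by
  induction S using Finset.strongInduction with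
  | H S ih =>
    rcases le_or_gt S.card 1 with h1 | h2
    · obtain ⟨q, rfl⟩ := card_eq_one.mp (le_antisymm h1 hS.card_pos)
      rw [fval_of_card_le_one z h1, sum_singleton]
      exact hc q (mem_singleton_self q)
    · have hD := hnd S h2
      rw [fval_of_pos h2 hD, le_div_iff₀ hD, mul_sum]
      refine sum_le_sum fun E hE => ?_
      have hE := mem_crossers.mp hE
      rw [mul_comm]
      exact mul_le_mul_of_nonneg_left
        (ih _ hE.sdiff_ssubset hE.2 fun p hp => hc p (sdiff_subset hp)) (hz E)

lemma sum_superset_le_fval (hz : ∀ E, 0 ≤ z E) (hnd : Nondeg z) (hW : W.Nonempty)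
    (hWS : W ⊆ S) : ∑ E ∈ univ.filter (fun E => S ⊆ E), z E ≤ fval z W := by
  refine le_fval_of_le_ell hz hnd hW fun p hp => ?_
  refine sum_le_sum_of_subset_of_nonneg (fun E hE => ?_) fun E _ _ => hz E
  rw [mem_filter] at hE ⊢
  exact ⟨mem_univ E, hE.2 (hWS hp)⟩

lemma pdhat_mul_crossWeight (hD : 0 < ∑ E ∈ crossers S, z E) :
    pdhat z S T * ∑ E ∈ crossers S, z E = ∑ E ∈ crossers S, z E * pdhat z (S \ E) T
      + if T ∈ crossers S then fval z (S \ T) - ∑ E ∈ univ.filter (fun E => S ⊆ E), z E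
        else 0 := by
  by_cases hC : Crosses T S
  · rw [if_pos (mem_crossers.mpr hC), pdhat_of_crosses hC, div_mul_cancel₀ _ hD.ne']
    ring
  rw [if_neg (mt mem_crossers.mp hC), add_zero]
  by_cases hST : S ⊆ T
  · rw [pdhat_of_subset hST, one_mul]
    exact sum_congr rfl fun E _ => by rw [pdhat_of_subset (sdiff_subset.trans hST), mul_one]
  · have hI : S ∩ T = ∅ := by_contra fun hI => hC (crosses_iff.mpr ⟨hST, hI⟩)
    rw [pdhat_of_inter_eq_empty hST hI, zero_mul, eq_comm]
    refine sum_eq_zero fun E hE => ?_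
    obtain ⟨p, hp⟩ := (mem_crossers.mp hE).2
    have hIE : S \ E ∩ T = ∅ := subset_empty.mp (hI ▸ inter_subset_inter_right sdiff_subset)
    have hSE : ¬ S \ E ⊆ T := fun h =>
      eq_empty_iff_forall_notMem.mp hIE p (mem_inter.mpr ⟨hp, h hp⟩)
    rw [pdhat_of_inter_eq_empty hSE hIE, mul_zero]

lemma card_inter_le_pdhat (h1 : S.card ≤ 1) : (#(S ∩ T) : ℝ) ≤ pdhat z S T := by
  by_cases hST : S ⊆ T
  · rw [pdhat_of_subset hST]
    exact_mod_cast (card_le_card inter_subset_left).trans h1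
  · have hI : S ∩ T = ∅ := eq_empty_of_forall_notMem fun p hp => hST fun q hq => by
      rw [card_le_one.mp h1 q hq p (mem_inter.mp hp).1]
      exact (mem_inter.mp hp).2
    rw [pdhat_of_inter_eq_empty hST hI, hI, card_empty, Nat.cast_zero]

lemma pdhat_nonneg (hz : ∀ E, 0 ≤ z E) (hnd : Nondeg z) (S T : Finset α) :
    0 ≤ pdhat z S T := by
  induction S using Finset.strongInduction with
  | H S ih =>
    rcases le_or_gt S.card 1 with h1 | h2
    · exact (Nat.cast_nonneg _).trans (card_inter_le_pdhat h1)
    · have hD := hnd S h2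
      rw [← mul_nonneg_iff_of_pos_right hD, pdhat_mul_crossWeight hD]
      refine add_nonneg (sum_nonneg fun E hE =>
        mul_nonneg (hz E) (ih _ (mem_crossers.mp hE).sdiff_ssubset)) ?_
      split_ifs with hT
      · exact sub_nonneg.mpr (sum_superset_le_fval hz hnd (mem_crossers.mp hT).2 sdiff_subset)
      · exact le_rfl

lemma eventually_crossWeight_pos (hD : 0 < ∑ E ∈ crossers S, z E) :
    ∀ᶠ w in 𝓝 z, 0 < ∑ E ∈ crossers S, w E :=
  (continuous_finsetSum _ fun E _ => continuous_apply E).continuousAt.eventually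
    (lt_mem_nhds hD)

lemma differentiableAt_fval (hnd : Nondeg z) (S : Finset α) :
    DifferentiableAt ℝ (fun w => fval w S) z := by
  induction S using Finset.strongInduction with
  | H S ih =>
    rcases le_or_gt S.card 1 with h1 | h2
    · rw [fval_fun_eq_of_card_le_one h1]
      fun_prop
    · have hD := hnd S h2
      have hquot : DifferentiableAt ℝ
          (fun w => (∑ E ∈ crossers S, w E * fval w (S \ E)) * (∑ E ∈ crossers S, w E)⁻¹) z :=
        (DifferentiableAt.fun_sum fun E hE => (differentiableAt_apply E z).mul
          (ih _ (mem_crossers.mp hE).sdiff_ssubset)).mul ((by fun_prop : DifferentiableAt ℝ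
            (fun w : Finset α → ℝ => ∑ E ∈ crossers S, w E) z).inv hD.ne')
      refine hquot.congr_of_eventuallyEq ?_
      filter_upwards [eventually_crossWeight_pos hD] with w hw
      rw [fval_of_pos h2 hw, div_eq_mul_inv]

lemma pderivf_of_card_le_one (h1 : S.card ≤ 1) : pderivf S T z = #(S ∩ T) := by
  rw [pderivf, fval_fun_eq_of_card_le_one h1, fderiv_fun_sum fun p _ => by fun_prop, _root_.sum_apply]
  simp only [fderiv_sum_apply_single, mem_filter, mem_univ, true_and]
  rw [sum_boole, filter_mem_eq_inter]

lemma pderivf_mul_crossWeight (hnd : Nondeg z) (h2 : 2 ≤ S.card) :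
    pderivf S T z * ∑ E ∈ crossers S, z E = ∑ E ∈ crossers S, z E * pderivf (S \ E) T z
      + if T ∈ crossers S then fval z (S \ T) - fval z S else 0 := by
  have hD := hnd S h2
  have hev : (fun w => fval w S * ∑ E ∈ crossers S, w E) =ᶠ[𝓝 z]
      fun w => ∑ E ∈ crossers S, w E * fval w (S \ E) := by
    filter_upwards [eventually_crossWeight_pos hD] with w hw
    rw [fval_of_pos h2 hw, div_mul_cancel₀ _ hw.ne']
  have key := congrArg (fun L : (Finset α → ℝ) →L[ℝ] ℝ => L (Pi.single T 1)) hev.fderiv_eq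
  rw [fderiv_fun_mul (differentiableAt_fval hnd S) (by fun_prop),
    fderiv_fun_sum fun E _ => (differentiableAt_apply E z).fun_mul (differentiableAt_fval hnd _)]
    at key
  simp only [add_apply, smul_apply, smul_eq_mul, _root_.sum_apply, fderiv_sum_apply_single,
    fderiv_apply_mul_apply_single (differentiableAt_fval hnd _)] at key
  rw [sum_add_distrib, sum_ite_eq'] at key
  simp only [pderivf]
  split_ifs at key ⊢ <;> linarith

lemma pderivf_le_pdhat (hz : ∀ E, 0 ≤ z E) (hnd : Nondeg z) (S T : Finset α) :
    pderivf S T z ≤ pdhat z S T := by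
  induction S using Finset.strongInduction with
  | H S ih =>
    rcases le_or_gt S.card 1 with h1 | h2
    · rw [pderivf_of_card_le_one h1]
      exact card_inter_le_pdhat h1
    · have hD := hnd S h2
      rw [← mul_le_mul_iff_of_pos_right hD, pderivf_mul_crossWeight hnd h2,
        pdhat_mul_crossWeight hD]
      gcongr ?_ + ?_
      · exact sum_le_sum fun E hE =>
          mul_le_mul_of_nonneg_left (ih _ (mem_crossers.mp hE).sdiff_ssubset) (hz E)
      · split_ifs with hT
        · have hS : S.Nonempty := (mem_crossers.mp hT).1.mono inter_subset_left
          exact sub_le_sub_left (sum_superset_le_fval hz hnd hS subset_rfl) _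
        · exact le_rfl

theorem stmt7_general {α : Type*} [Fintype α] [DecidableEq α]
    (z : Finset α → ℝ) (hz : ∀ E : Finset α, 0 ≤ z E) (hnd : Nondeg z)
    (S T : Finset α) :
    max (pderivf S T z) 0 ≤ pdhat z S T :=
  max_le (pderivf_le_pdhat hz hnd S T) (pdhat_nonneg hz hnd S T)

/-- the pseudo-derivative is nonnegative and bounds the derivative
from above. -/
theorem stmt7 {α : Type*} [Fintype α] [DecidableEq α]
    (z : Finset α → ℝ) (hz : ∀ E : Finset α, 0 ≤ z E) (hnd : Nondeg z)
    (S T : Finset α) (hS : S.Nonempty) :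
    max (pderivf S T z) 0 ≤ pdhat z S T :=
  stmt7_general z hz hnd S T
end

section
/- Let U be a finite set and let z be a nondegenerate nonnegative weight vector. Then for every nonempty S ⊆ U, min_{a∈S} ℓ(a) ≤ f(S) ≤ max_{b∈S} ℓ(b). -/
open Finset

variable {α : Type*} [Fintype α] [DecidableEq α]

lemma Icc_inf'_sup'_subset {β γ : Type*} [Lattice γ] {T S : Finset β} (g : β → γ)
    (hTS : T ⊆ S) (hT : T.Nonempty) :
    Set.Icc (T.inf' hT g) (T.sup' hT g) ⊆
      Set.Icc (S.inf' (hT.mono hTS) g) (S.sup' (hT.mono hTS) g) :=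
  Set.Icc_subset_Icc (inf'_mono g hTS hT) (sup'_mono g hTS hT)

lemma sdiff_ssubset_of_mem_crossers {E S : Finset α} (h : E ∈ crossers S) : S \ E ⊂ S :=
  sdiff_subset.ssubset_of_ne fun heq => (card_sdiff_lt_of_mem_crossers h).ne (congrArg card heq)

lemma sdiff_nonempty_of_mem_crossers {E S : Finset α} (h : E ∈ crossers S) : (S \ E).Nonempty :=
  (mem_filter.mp h).2.2

lemma fval_singleton (z : Finset α → ℝ) (p : α) : fval z {p} = ell z p := by
  rw [fval]
  simp

lemma fval_eq_centerMass (z : Finset α → ℝ) {S : Finset α} (hS : 2 ≤ S.card)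
    (hpos : 0 < ∑ E ∈ crossers S, z E) :
    fval z S =
      (crossers S).attach.centerMass (fun E => z E.1) (fun E => fval z (S \ E.1)) := by
  rw [fval, if_neg (by omega), if_pos hpos, centerMass, sum_attach (crossers S) z,
    smul_eq_mul, inv_mul_eq_div]
  rfl

/-- `f(S)` is a convex combination of the values `f(S \ E)`, so by induction it stays in the
range of `ℓ` on `S`. -/
lemma fval_mem_Icc (z : Finset α → ℝ) (hz : ∀ E : Finset α, 0 ≤ z E) (hnd : Nondeg z)
    (S : Finset α) (hS : S.Nonempty) :
    fval z S ∈ Set.Icc (S.inf' hS (ell z)) (S.sup' hS (ell z)) := by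
  induction S using Finset.strongInduction with
  | H S ih =>
  obtain ⟨p, rfl⟩ | hS2 := hS.exists_eq_singleton_or_nontrivial
  · simp [fval_singleton]
  replace hS2 : 2 ≤ S.card := one_lt_card_iff_nontrivial.mpr hS2
  rw [fval_eq_centerMass z hS2 (hnd S hS2)]
  refine (convex_Icc _ _).centerMass_mem (fun E _ => hz E.1)
    (by rw [sum_attach (crossers S) z]; exact hnd S hS2) fun E _ => ?_
  have hne := sdiff_nonempty_of_mem_crossers E.2
  exact Icc_inf'_sup'_subset (ell z) sdiff_subset hne
    (ih _ (sdiff_ssubset_of_mem_crossers E.2) hne)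

/-- `f(S)` lies between the minimum and maximum norm of points of `S`. -/
theorem stmt10 {α : Type*} [Fintype α] [DecidableEq α]
    (z : Finset α → ℝ) (hz : ∀ E : Finset α, 0 ≤ z E) (hnd : Nondeg z)
    (S : Finset α) (hS : S.Nonempty) :
    S.inf' hS (ell z) ≤ fval z S ∧ fval z S ≤ S.sup' hS (ell z) :=
  fval_mem_Icc z hz hnd S hS
end
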